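/- Let n ≥ 1, T > 0 and m ∈ ℕ with m ≥ max(3, T log m). Under n-dimensional Wiener measure on C([0,T]; ℝⁿ), let A_{T,m} be the event that max_{0 ≤ k ≤ m−1} |x(kT/m) + x((k+1)T/m) − 2x((k+1/2)T/m)| > √((T/m) log m). Then the complement satisfies W^n_T(A_{T,m}^c) ≤ exp(−n/√(2π)). -/

import Mathlib

/-!
On the grid of mesh `T/(2m)`, the `i`-th coordinate of the `k`-th midpoint deviation is the
difference of the increments of `W · i` over the two halves of `[kT/m, (k+1)T/m]`. These `nm`
coordinates are therefore independent `N(0, T/m)` variables, and the event forces each of them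
into `[-c, c]` with `c = √((T/m) log m)`. The Mills-ratio bound `P(Z > a) ≥ a/(1+a²) φ(a)` for a
standard normal `Z` gives `P(|Z| ≤ √(log m)) ≤ 1 - 1/(m√(2π))` once `log m ≥ 1`, so the event has
probability at most `(1 - 1/(m√(2π)))^(nm) ≤ exp(-n/√(2π))`.
-/

open MeasureTheory ProbabilityTheory Set

/-- An `n`-dimensional standard Brownian motion: continuous paths started at `0`, with
coordinatewise Gaussian increments `W t i - W s i ∼ N(0, t - s)`, the increments over
disjoint time intervals and distinct coordinates being jointly independent. -/
def IsBrownianMotion {Ω : Type*} [MeasurableSpace Ω] (n : ℕ) (P : Measure Ω)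
    (W : ℝ → Ω → EuclideanSpace ℝ (Fin n)) : Prop :=
  (∀ ω, Continuous fun t => W t ω) ∧ (∀ ω, W 0 ω = 0) ∧ (∀ t, Measurable (W t)) ∧
  (∀ (i : Fin n) (s t : ℝ), 0 ≤ s → s ≤ t →
    P.map (fun ω => W t ω i - W s ω i) = gaussianReal 0 (Real.toNNReal (t - s))) ∧
  (∀ (m : ℕ) (u : ℕ → ℝ), Monotone u → 0 ≤ u 0 →
    iIndepFun
      (fun (q : Fin n × Fin m) ω => W (u (q.2 + 1)) ω q.1 - W (u q.2) ω q.1) P)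

open Filter Topology Real NNReal

lemma hasDerivAt_gaussianPDFReal (μ : ℝ) (v : ℝ≥0) (x : ℝ) :
    HasDerivAt (gaussianPDFReal μ v) (-((x - μ) / v) * gaussianPDFReal μ v x) x := by
  have hsq : HasDerivAt (fun y : ℝ => -(y - μ) ^ 2 / (2 * (v : ℝ))) (-((x - μ) / v)) x := by
    have h : HasDerivAt (fun y : ℝ => -(y - μ) ^ 2 / (2 * (v : ℝ)))
        (-(2 * (x - μ) ^ (2 - 1) * 1) / (2 * (v : ℝ))) x :=
      ((hasDerivAt_id' x).sub_const μ).fun_pow 2 |>.fun_neg |>.div_const _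
    refine h.congr_deriv ?_
    rcases eq_or_ne (v : ℝ) 0 with hv | hv
    · simp [hv]
    · field_simp; ring
  have h := hsq.exp.const_mul (√(2 * π * v))⁻¹
  rw [← gaussianPDFReal_def] at h
  refine h.congr_deriv ?_
  rw [gaussianPDFReal]; ring

lemma tendsto_gaussianPDFReal_atTop (μ : ℝ) {v : ℝ≥0} (hv : v ≠ 0) :
    Tendsto (gaussianPDFReal μ v) atTop (𝓝 0) := by
  have hsq : Tendsto (fun x : ℝ => -(x - μ) ^ 2 / (2 * (v : ℝ))) atTop atBot := by
    refine (tendsto_neg_atTop_atBot.comp ?_).atBot_div_const (by positivity)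
    exact (tendsto_pow_atTop two_ne_zero).comp (tendsto_atTop_add_const_right _ _ tendsto_id)
  simpa [gaussianPDFReal_def] using (tendsto_exp_atBot.comp hsq).const_mul (√(2 * π * v))⁻¹

lemma hasDerivAt_mul_div_add_sq_mul_gaussianPDFReal {v : ℝ≥0} (hv : v ≠ 0) (x : ℝ) :
    HasDerivAt (fun x : ℝ => v * x / (v + x ^ 2) * gaussianPDFReal 0 v x)
      (-((x ^ 4 + 2 * v * x ^ 2 - v ^ 2) / (v + x ^ 2) ^ 2) * gaussianPDFReal 0 v x) x := by
  have hpos : (0 : ℝ) < v + x ^ 2 := by positivity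
  have hr : HasDerivAt (fun x : ℝ => v * x / (v + x ^ 2))
      ((v * 1 * (v + x ^ 2) - v * x * (2 * x ^ (2 - 1) * 1)) / (v + x ^ 2) ^ 2) x :=
    ((hasDerivAt_id' x).const_mul _).div (((hasDerivAt_id' x).fun_pow 2).const_add _) hpos.ne'
  refine (hr.mul (hasDerivAt_gaussianPDFReal 0 v x)).congr_deriv ?_
  field_simp
  ring

lemma mul_gaussianPDFReal_le_integral_Ioi {v : ℝ≥0} (hv : v ≠ 0) (a : ℝ) :
    v * a / (v + a ^ 2) * gaussianPDFReal 0 v a ≤ ∫ x in Ioi a, gaussianPDFReal 0 v x := by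
  set φ := gaussianPDFReal 0 v
  set r' : ℝ → ℝ := fun x => -((x ^ 4 + 2 * v * x ^ 2 - v ^ 2) / (v + x ^ 2) ^ 2)
  -- `|x ^ 4 + 2 v x ^ 2 - v ^ 2| ≤ (v + x ^ 2) ^ 2`, i.e. `|r' x| ≤ 1`
  have hr'_le : ∀ x, |r' x * φ x| ≤ φ x := by
    intro x
    rw [abs_mul, abs_of_nonneg (gaussianPDFReal_nonneg _ _ _)]
    refine mul_le_of_le_one_left (gaussianPDFReal_nonneg _ _ _) ?_
    rw [abs_neg, abs_div, abs_of_pos (by positivity : (0 : ℝ) < (v + x ^ 2) ^ 2),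
      div_le_one (by positivity), abs_le]
    constructor <;> nlinarith [sq_nonneg x, sq_nonneg (x ^ 2)]
  have hr'_int : Integrable fun x => r' x * φ x := by
    refine (integrable_gaussianPDFReal 0 v).mono' ?_ (ae_of_all _ hr'_le)
    have hr' : Continuous r' :=
      ((by fun_prop : Continuous fun x : ℝ => x ^ 4 + 2 * v * x ^ 2 - v ^ 2).div
        (by fun_prop) fun x => by positivity).neg
    have hφ : Continuous φ :=
      continuous_iff_continuousAt.2 fun x => (hasDerivAt_gaussianPDFReal 0 v x).continuousAt
    exact (hr'.mul hφ).aestronglyMeasurable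
  have hr_lim : Tendsto (fun x : ℝ => v * x / (v + x ^ 2)) atTop (𝓝 0) := by
    refine squeeze_zero' (eventually_atTop.2 ⟨0, fun x hx => by positivity⟩)
      (eventually_atTop.2 ⟨1, fun x hx => ?_⟩)
      ((tendsto_const_nhds (x := (v : ℝ))).div_atTop tendsto_id)
    rw [id, div_le_div_iff₀ (by positivity) (by positivity)]
    nlinarith
  have hint := integral_Ioi_of_hasDerivAt_of_tendsto' (a := a)
    (fun x _ => hasDerivAt_mul_div_add_sq_mul_gaussianPDFReal hv x) hr'_int.integrableOn
    (by simpa using hr_lim.mul (tendsto_gaussianPDFReal_atTop 0 hv))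
  calc _ = ∫ x in Ioi a, -(r' x * φ x) := by rw [integral_neg, hint]; ring
    _ ≤ ∫ x in Ioi a, φ x :=
      setIntegral_mono hr'_int.integrableOn.neg (integrable_gaussianPDFReal 0 v).integrableOn
        fun x => (neg_le_abs _).trans (hr'_le x)

lemma gaussianReal_real_Icc_le {v : ℝ≥0} (hv : v ≠ 0) {c : ℝ} (hc : 0 ≤ c) :
    (gaussianReal 0 v).real (Icc (-c) c) ≤
      1 - 2 * (v * c / (v + c ^ 2) * gaussianPDFReal 0 v c) := by
  have hIoi : v * c / (v + c ^ 2) * gaussianPDFReal 0 v c ≤ (gaussianReal 0 v).real (Ioi c) := by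
    rw [measureReal_def, gaussianReal_apply_eq_integral 0 hv, ENNReal.toReal_ofReal
      (setIntegral_nonneg measurableSet_Ioi fun x _ => gaussianPDFReal_nonneg 0 v x)]
    exact mul_gaussianPDFReal_le_integral_Ioi hv c
  have hIio : (gaussianReal 0 v).real (Iio (-c)) = (gaussianReal 0 v).real (Ioi c) := by
    conv_lhs => rw [← neg_zero, ← gaussianReal_map_neg]
    rw [map_measureReal_apply measurable_neg measurableSet_Iio]
    congr 1 with x
    simp
  have hunion := measureReal_le_one (μ := gaussianReal 0 v) (s := Icc (-c) c ∪ Ioi c ∪ Iio (-c))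
  rw [measureReal_union _ measurableSet_Iio, measureReal_union _ measurableSet_Ioi, hIio] at hunion
  · linarith
  · exact Set.disjoint_left.2 fun x hx hx' => by linarith [hx.2, mem_Ioi.1 hx']
  · refine Set.disjoint_left.2 fun x hx hx' => ?_
    rcases hx with hx | hx
    · linarith [hx.1, mem_Iio.1 hx']
    · linarith [mem_Ioi.1 hx, mem_Iio.1 hx']

lemma exp_neg_le_two_mul_sqrt_div_mul_exp {L : ℝ} (hL : 1 ≤ L) :
    exp (-L) ≤ 2 * √L / (1 + L) * exp (-(L / 2)) := by
  have hE : exp (-(L / 2)) * (1 + L / 2) ≤ 1 := by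
    calc exp (-(L / 2)) * (1 + L / 2) ≤ exp (-(L / 2)) * exp (L / 2) := by
          gcongr; linarith [add_one_le_exp (L / 2)]
      _ = 1 := by rw [← exp_add, neg_add_cancel, exp_zero]
  have hsqL : 1 ≤ √L := one_le_sqrt.2 hL
  rw [show -L = -(L / 2) + -(L / 2) by ring, exp_add, div_mul_eq_mul_div,
    le_div_iff₀ (by linarith)]
  nlinarith [exp_pos (-(L / 2))]

lemma gaussianReal_real_Icc_sqrt_le {v : ℝ≥0} (hv : v ≠ 0) {L : ℝ} (hL : 1 ≤ L) :
    (gaussianReal 0 v).real (Icc (-√(v * L)) √(v * L)) ≤ 1 - exp (-L) / √(2 * π) := by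
  refine (gaussianReal_real_Icc_le hv (sqrt_nonneg _)).trans (sub_le_sub_left ?_ 1)
  have hc : √(v * L) ^ 2 = v * L := sq_sqrt (by positivity)
  have hexp : -(v * L) / (2 * v) = -(L / 2) := by field_simp
  rw [gaussianPDFReal, sub_zero, hc, hexp, sqrt_mul' _ (by positivity : (0 : ℝ) ≤ L),
    sqrt_mul (by positivity : (0 : ℝ) ≤ 2 * π)]
  calc exp (-L) / √(2 * π) ≤ 2 * √L / (1 + L) * exp (-(L / 2)) / √(2 * π) := by
        gcongr; exact exp_neg_le_two_mul_sqrt_div_mul_exp hL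
    _ = _ := by
      field_simp

lemma ProbabilityTheory.iIndepFun.curry {Ω ι κ 𝓧 : Type*} {mΩ : MeasurableSpace Ω}
    [MeasurableSpace 𝓧] {P : Measure Ω} {X : ι → κ → Ω → 𝓧} (mX : ∀ i j, Measurable (X i j))
    (h : iIndepFun (fun (p : ι × κ) ω ↦ X p.1 p.2 ω) P) :
    iIndepFun (fun i ω ↦ (X i · ω)) P := by
  have := h.isProbabilityMeasure
  have : ∀ i j, IsProbabilityMeasure (P.map (X i j)) :=
    fun i j ↦ Measure.isProbabilityMeasure_map (mX i j).aemeasurable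
  have hσ : iIndepFun (fun (p : (_ : ι) × κ) ω ↦ X p.1 p.2 ω) P :=
    h.precomp (Equiv.sigmaEquivProd ι κ).injective
  have hcurry : MeasurableEquiv.piCurry (fun _ _ ↦ 𝓧) ∘ (fun ω (p : (_ : ι) × κ) ↦ X p.1 p.2 ω) =
      fun ω i j ↦ X i j ω := by
    ext; simp [Sigma.curry]
  rw [iIndepFun_iff_map_fun_eq_infinitePi_map (by fun_prop), ← hcurry,
    ← Measure.map_map (by fun_prop) (by fun_prop),
    (iIndepFun_iff_map_fun_eq_infinitePi_map (by fun_prop)).1 hσ,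
    Measure.infinitePi_map_piCurry (fun i j ↦ P.map (X i j))]
  congrm Measure.infinitePi fun i ↦ ?_
  have hrow : iIndepFun (X i) P := h.precomp (g := Prod.mk i) (Prod.mk_right_injective i)
  exact ((iIndepFun_iff_map_fun_eq_infinitePi_map (mX i)).1 hrow).symm

lemma ProbabilityTheory.gaussianReal_sub_gaussianReal_of_indepFun {Ω : Type*}
    {mΩ : MeasurableSpace Ω} {P : Measure Ω} {m₁ m₂ : ℝ} {v₁ v₂ : ℝ≥0} {X Y : Ω → ℝ}
    (hXY : IndepFun X Y P) (hX : P.map X = gaussianReal m₁ v₁) (hY : P.map Y = gaussianReal m₂ v₂) :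
    P.map (X - Y) = gaussianReal (m₁ - m₂) (v₁ + v₂) := by
  have hYm : AEMeasurable Y P := .of_map_ne_zero (by simp [hY, NeZero.ne])
  have hnegY : P.map (-Y) = gaussianReal (-m₂) v₂ := (gaussianReal_neg ⟨hYm, hY⟩).map_eq
  rw [sub_eq_add_neg, sub_eq_add_neg]
  exact gaussianReal_add_gaussianReal_of_indepFun (hXY.comp measurable_id measurable_neg) hX hnegY

lemma ProbabilityTheory.iIndepFun.measure_iInter_preimage_eq_pow {Ω ι 𝓧 : Type*}
    {mΩ : MeasurableSpace Ω} [MeasurableSpace 𝓧] [Fintype ι] {P : Measure Ω} {X : ι → Ω → 𝓧}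
    (hX : iIndepFun X P) (mX : ∀ i, Measurable (X i)) {μ : Measure 𝓧}
    (hμ : ∀ i, P.map (X i) = μ) {s : Set 𝓧} (hs : MeasurableSet s) :
    P (⋂ i, X i ⁻¹' s) = μ s ^ Fintype.card ι := by
  rw [hX.meas_iInter fun i => ⟨s, hs, rfl⟩, ← Finset.card_univ, ← Finset.prod_const]
  exact Finset.prod_congr rfl fun i _ => by rw [← hμ i, Measure.map_apply (mX i) hs]

lemma IsBrownianMotion.measure_midpoint_deviations_le {Ω : Type*} [MeasurableSpace Ω]
    {n : ℕ} {P : Measure Ω} {W : ℝ → Ω → EuclideanSpace ℝ (Fin n)} (hW : IsBrownianMotion n P W)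
    (δ : ℝ≥0) (m : ℕ) (c : ℝ) :
    P {ω | ∀ k : Fin m,
        ‖W (k * δ) ω + W ((k + 1) * δ) ω - (2 : ℝ) • W ((k + 1 / 2) * δ) ω‖ ≤ c} ≤
      gaussianReal 0 δ (Icc (-c) c) ^ (n * m) := by
  obtain ⟨-, -, hmeas, hlaw, hindep⟩ := hW
  set u : ℕ → ℝ := fun j => j * (δ / 2)
  have hu_mono : Monotone u := fun a b hab => by simp only [u]; gcongr
  set Δ : Fin n × Fin (m * 2) → Ω → ℝ := fun q ω => W (u (q.2 + 1)) ω q.1 - W (u q.2) ω q.1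
  have hΔ : iIndepFun Δ P := hindep (m * 2) u hu_mono (by simp [u])
  have hΔm : ∀ q, Measurable (Δ q) := by
    have hcoord : ∀ t i, Measurable fun ω => W t ω i := fun t i =>
      (measurable_pi_apply i).comp ((WithLp.measurable_ofLp _ _).comp (hmeas t))
    exact fun q => (hcoord _ _).sub (hcoord _ _)
  have hΔlaw : ∀ q, P.map (Δ q) = gaussianReal 0 (δ / 2) := fun q => by
    rw [hlaw _ _ _ (by positivity) (hu_mono (Nat.le_succ _)),
      show u (q.2 + 1) - u q.2 = ((δ / 2 : ℝ≥0) : ℝ) by simp only [u]; push_cast; ring,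
      Real.toNNReal_coe]
  -- `σ ((i, k), b)` indexes the increment of `W · i` over `[(k + b/2) δ, (k + (b+1)/2) δ]`
  let σ : (Fin n × Fin m) × Fin 2 ≃ Fin n × Fin (m * 2) :=
    (Equiv.prodAssoc _ _ _).trans ((Equiv.refl _).prodCongr finProdFinEquiv)
  have hΔσ := hΔ.precomp σ.injective
  set D : Fin n × Fin m → Ω → ℝ := fun q ω => Δ (σ (q, 1)) ω - Δ (σ (q, 0)) ω
  have hD : iIndepFun D P :=
    (hΔσ.curry (X := fun q b => Δ (σ (q, b))) fun q b => hΔm _).comp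
      (fun _ v => v 1 - v 0) fun _ => by fun_prop
  have hDlaw : ∀ q, P.map (D q) = gaussianReal 0 δ := fun q => by
    have h := gaussianReal_sub_gaussianReal_of_indepFun
      (hΔσ.indepFun (by simp : (q, (1 : Fin 2)) ≠ (q, 0))) (hΔlaw _) (hΔlaw _)
    rwa [sub_zero, add_halves] at h
  have hDdev : ∀ q ω, D q ω =
      (W (q.2 * δ) ω + W ((q.2 + 1) * δ) ω - (2 : ℝ) • W ((q.2 + 1 / 2) * δ) ω) q.1 := by
    rintro ⟨i, k⟩ ω
    simp only [D, Δ, u, σ, Equiv.trans_apply, Equiv.prodAssoc_apply, Equiv.prodCongr_apply,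
      Equiv.coe_refl, Prod.map_apply, id_eq, finProdFinEquiv_apply_val, Fin.isValue,
      Fin.coe_ofNat_eq_mod, Nat.mod_succ, Nat.zero_mod, zero_add, Nat.cast_add, Nat.cast_one,
      Nat.cast_mul, Nat.cast_ofNat, PiLp.sub_apply, PiLp.add_apply, PiLp.smul_apply, smul_eq_mul]
    ring_nf
  calc _ ≤ P (⋂ q, D q ⁻¹' Icc (-c) c) := measure_mono fun ω hω => mem_iInter.2 fun q => by
        rw [mem_preimage, hDdev, mem_Icc, ← abs_le]
        exact (PiLp.norm_apply_le _ _).trans (hω q.2)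
    _ = gaussianReal 0 δ (Icc (-c) c) ^ (n * m) := by
      rw [hD.measure_iInter_preimage_eq_pow (fun q => (hΔm _).sub (hΔm _)) hDlaw measurableSet_Icc,
        Fintype.card_prod, Fintype.card_fin, Fintype.card_fin]

theorem wiener_midpoint_deviation_bound_general {Ω : Type*} [MeasurableSpace Ω]
    (n : ℕ) (P : Measure Ω)
    (W : ℝ → Ω → EuclideanSpace ℝ (Fin n)) (hW : IsBrownianMotion n P W)
    (T : ℝ) (hT : 0 < T) (m : ℕ) (hm3 : 3 ≤ m) :
    (P {ω | ∀ k : Fin m,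
        ‖W ((k : ℝ) * T / m) ω + W (((k : ℝ) + 1) * T / m) ω
            - (2 : ℝ) • W ((((k : ℝ)) + 1 / 2) * T / m) ω‖ ≤
          Real.sqrt (T / m * Real.log m)}).toReal ≤
      Real.exp (-(n : ℝ) / Real.sqrt (2 * Real.pi)) := by
  have hm : (0 : ℝ) < m := by positivity
  set δ : ℝ≥0 := (T / m).toNNReal
  have hδ : (δ : ℝ) = T / m := Real.coe_toNNReal _ (by positivity)
  have hδ0 : δ ≠ 0 := (Real.toNNReal_pos.2 (by positivity)).ne'
  have hL : 1 ≤ log m := by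
    have : (3 : ℝ) ≤ m := by exact_mod_cast hm3
    rw [le_log_iff_exp_le hm]
    linarith [exp_one_lt_d9]
  have hdev := hW.measure_midpoint_deviations_le δ m √(δ * log m)
  have hgauss := gaussianReal_real_Icc_sqrt_le hδ0 hL
  simp only [hδ] at hdev hgauss
  simp only [mul_div_assoc]
  calc _ ≤ (gaussianReal 0 δ (Icc (-√(T / m * log m)) √(T / m * log m)) ^ (n * m)).toReal :=
        ENNReal.toReal_mono (ENNReal.pow_ne_top (measure_ne_top _ _)) hdev
    _ ≤ exp (-(exp (-log m) / √(2 * π))) ^ (n * m) := by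
      rw [ENNReal.toReal_pow]
      exact pow_le_pow_left₀ ENNReal.toReal_nonneg (hgauss.trans (one_sub_le_exp_neg _)) _
    _ = exp (-(n : ℝ) / √(2 * π)) := by
      rw [← exp_nat_mul, exp_neg (log m), exp_log hm]
      push_cast
      field_simp

/-- Under `n`-dimensional Wiener measure, the probability that all midpoint deviations
`x(kT/m) + x((k+1)T/m) - 2 x((k+½)T/m)`, `k = 0, …, m-1`, are at most `√((T/m) log m)`
is bounded by `exp(-n/√(2π))`, provided `m ≥ max(3, T log m)`. -/
theorem wiener_midpoint_deviation_bound {Ω : Type*} [MeasurableSpace Ω]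
    (n : ℕ) (hn : 1 ≤ n) (P : Measure Ω) [IsProbabilityMeasure P]
    (W : ℝ → Ω → EuclideanSpace ℝ (Fin n)) (hW : IsBrownianMotion n P W)
    (T : ℝ) (hT : 0 < T) (m : ℕ) (hm3 : 3 ≤ m) (hmT : T * Real.log m ≤ m) :
    (P {ω | ∀ k : Fin m,
        ‖W ((k : ℝ) * T / m) ω + W (((k : ℝ) + 1) * T / m) ω
            - (2 : ℝ) • W ((((k : ℝ)) + 1 / 2) * T / m) ω‖ ≤
          Real.sqrt (T / m * Real.log m)}).toReal ≤
      Real.exp (-(n : ℝ) / Real.sqrt (2 * Real.pi)) :=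
  wiener_midpoint_deviation_bound_general n P W hW T hT m hm3
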